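/- arXiv:1606.05878 — 4 statements merged into one kernel-verified Lean document; each statement's English description precedes it below -/
import Mathlib

section
/- Let X be a real normed vector space, F, G₁,…,G_m continuous linear functionals on X. Suppose that for every ψ ∈ X there exist indices i, j ∈ {1,…,m} such that F(ψ) ≥ Gᵢ(ψ) and F(ψ) ≤ G_j(ψ). Then F lies in the convex hull of {G₁,…,G_m}: there exist μ₁,…,μ_m ∈ [0,1] with ∑ μᵢ = 1 and F = ∑ᵢ μᵢ Gᵢ. -/
/-- If for every ψ there are indices i, j with Gᵢ(ψ) ≤ F(ψ) ≤ G_j(ψ), then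
F is a convex combination of the Gᵢ. -/
theorem stmt_2 {X : Type*} [NormedAddCommGroup X] [NormedSpace ℝ X]
    {m : ℕ} (F : X →L[ℝ] ℝ) (G : Fin m → (X →L[ℝ] ℝ))
    (h : ∀ ψ : X, ∃ i j : Fin m, G i ψ ≤ F ψ ∧ F ψ ≤ G j ψ) :
    ∃ μ : Fin m → ℝ, (∀ i, μ i ∈ Set.Icc (0 : ℝ) 1) ∧ ∑ i, μ i = 1 ∧
      F = ∑ i, μ i • G i := by
  rcases Nat.eq_zero_or_pos m with hm | hm
  · obtain ⟨i, -, -⟩ := h 0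
    exact absurd i.2 (by omega)
  -- the linear map ψ ↦ (Gᵢψ - Fψ)ᵢ
  set Φ : X →ₗ[ℝ] (Fin m → ℝ) :=
    LinearMap.pi (fun i => ((G i - F : X →L[ℝ] ℝ) : X →ₗ[ℝ] ℝ)) with hΦ
  set A : Set (Fin m → ℝ) := (LinearMap.range Φ : Set (Fin m → ℝ)) with hA
  set O : Set (Fin m → ℝ) := {x | ∀ i, x i < 0} with hO
  have hOopen : IsOpen O := by
    have : O = ⋂ i, {x : Fin m → ℝ | x i < 0} := by
      ext x; simp [hO, Set.mem_iInter]
    rw [this]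
    exact isOpen_iInter_of_finite fun i =>
      isOpen_lt (continuous_apply i) continuous_const
  have hOconv : Convex ℝ O := by
    intro x hx y hy a b ha hb hab
    intro i
    rcases eq_or_lt_of_le ha with ha' | ha'
    · simpa [← ha', (by linarith : b = 1)] using hy i
    rcases eq_or_lt_of_le hb with hb' | hb'
    · simpa [← hb', (by linarith : a = 1)] using hx i
    have := hx i; have := hy i
    have : a * x i < 0 := mul_neg_of_pos_of_neg ha' (hx i)
    have : b * y i < 0 := mul_neg_of_pos_of_neg hb' (hy i)
    simp only [Pi.add_apply, Pi.smul_apply, smul_eq_mul]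
    linarith
  have hAconv : Convex ℝ A := (LinearMap.range Φ).convex
  have hdisj : Disjoint O A := by
    rw [Set.disjoint_left]
    rintro x hxO ⟨ψ, rfl⟩
    obtain ⟨i, j, hij, hj⟩ := h ψ
    have := hxO j
    simp only [hΦ, LinearMap.pi_apply, ContinuousLinearMap.coe_coe,
      ContinuousLinearMap.coe_sub', Pi.sub_apply] at this
    linarith
  obtain ⟨f, u, hfO, hfA⟩ := geometric_hahn_banach_open hOconv hOopen hAconv hdisj
  -- f vanishes on A
  have hu0 : u ≤ 0 := by simpa using hfA 0 (Submodule.zero_mem _)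
  have hf0 : ∀ b ∈ LinearMap.range Φ, f b = 0 := by
    intro b hb
    by_contra hfb
    have h1 : u ≤ f (((u - 1) / f b) • b) :=
      hfA _ (Submodule.smul_mem _ _ hb)
    rw [map_smul, smul_eq_mul, div_mul_cancel₀ _ hfb] at h1
    linarith
  -- coefficients
  set lam : Fin m → ℝ := fun i => f (Pi.single i 1) with hlam
  have hc : f (fun _ => (-1 : ℝ)) < u := hfO _ (fun i => by norm_num)
  have hfone : f (fun _ => (1 : ℝ)) = -(f (fun _ => (-1 : ℝ))) := by
    rw [← map_neg]; congr 1; ext j; simp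
  have hsum_eq : ∑ i, lam i = f (fun _ => (1 : ℝ)) := by
    rw [← map_sum]
    congr 1
    ext j
    simp [Finset.sum_apply, Pi.single_apply]
  have hspos : 0 < ∑ i, lam i := by
    rw [hsum_eq, hfone]; linarith
  have hlamnn : ∀ i, 0 ≤ lam i := by
    intro i
    by_contra hneg
    push_neg at hneg
    set c := f (fun _ => (-1 : ℝ)) with hcdef
    have hcneg : c < 0 := lt_of_lt_of_le hc hu0
    set ε : ℝ := lam i / (2 * c) with hε
    have hεpos : 0 < ε := div_pos_of_neg_of_neg hneg (by linarith)
    have hmem : (fun j => -((Pi.single i 1 : Fin m → ℝ) j) - ε) ∈ O := by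
      intro j
      simp only
      rcases eq_or_ne i j with rfl | hij
      · simp [Pi.single_apply]; linarith
      · simp [Pi.single_apply, hij.symm]; linarith
    have h2 : f (fun j => -((Pi.single i 1 : Fin m → ℝ) j) - ε) < u := hfO _ hmem
    have heq : (fun j => -((Pi.single i 1 : Fin m → ℝ) j) - ε) =
        -(Pi.single i 1 : Fin m → ℝ) + ε • (fun _ => (-1 : ℝ)) := by
      ext j; simp [smul_eq_mul]; ring
    rw [heq, map_add, map_neg, map_smul, smul_eq_mul, ← hcdef] at h2
    have : ε * c = lam i / 2 := by
      rw [hε, div_mul_eq_mul_div, mul_comm 2 c, ← div_div,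
        mul_div_cancel_right₀ _ hcneg.ne]
    rw [this] at h2
    have : -lam i + lam i / 2 < u := by simpa [hlam] using h2
    linarith
  set s : ℝ := ∑ i, lam i with hs
  refine ⟨fun i => lam i / s, ?_, ?_, ?_⟩
  · intro i
    constructor
    · exact div_nonneg (hlamnn i) hspos.le
    · rw [div_le_one hspos]
      calc lam i = ∑ j ∈ {i}, lam j := by simp
        _ ≤ s := Finset.sum_le_sum_of_subset_of_nonneg
            (Finset.subset_univ _) (fun j _ _ => hlamnn j)
  · rw [← Finset.sum_div, ← hs, div_self hspos.ne']
  · ext ψ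
    have hval : f (Φ ψ) = 0 := hf0 _ ⟨ψ, rfl⟩
    have hrep : f (Φ ψ) = ∑ i, (Φ ψ i) * lam i := by
      conv_lhs => rw [show Φ ψ = ∑ i, (Φ ψ i) • (Pi.single i 1 : Fin m → ℝ) by
        ext j; simp [Pi.single_apply, Finset.sum_apply]]
      rw [map_sum]
      simp [hlam, smul_eq_mul]
    have hΦval : ∀ i, Φ ψ i = G i ψ - F ψ := by
      intro i; simp [hΦ]
    rw [hrep] at hval
    simp only [hΦval] at hval
    have hexp : ∑ i, (G i ψ - F ψ) * lam i
        = (∑ i, lam i * G i ψ) - s * F ψ := by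
      rw [hs, Finset.sum_mul, ← Finset.sum_sub_distrib]
      congr 1; ext i; ring
    rw [hexp] at hval
    have hFψ : s * F ψ = ∑ i, lam i * G i ψ := by linarith
    simp only [ContinuousLinearMap.sum_apply, ContinuousLinearMap.coe_smul',
      Pi.smul_apply, smul_eq_mul]
    have : ∑ i, lam i / s * (G i) ψ = (∑ i, lam i * G i ψ) / s := by
      rw [Finset.sum_div]; congr 1; ext i; ring
    rw [this, ← hFψ, mul_div_cancel_left₀ _ hspos.ne']
end

section
/- Let f₁, f₂ be continuous real-valued functions on a connected open set I ⊆ ℝ^d, neither identically zero. Suppose that for every pair of distinct points x₁, x₂ ∈ I the vectors (f₁(x₁), f₂(x₁)) and (f₁(x₂), f₂(x₂)) in ℝ² are linearly dependent. Then f₁ and f₂ are linearly dependent as functions: there exist constants α₁, α₂, not both zero, with α₁ f₁ + α₂ f₂ = 0 on some nonempty open subset of I. -/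
/-- If f₁, f₂ are continuous, not identically zero on a connected open set
I ⊆ ℝ^d, and the vectors (f₁(x₁), f₂(x₁)), (f₁(x₂), f₂(x₂)) ∈ ℝ² are linearly dependent
for all distinct x₁, x₂ ∈ I, then f₁, f₂ are linearly dependent on a nonempty open
subset of I. -/
theorem stmt_4 {d : ℕ} (I : Set (Fin d → ℝ)) (hI : IsOpen I) (hconn : IsConnected I)
    (f₁ f₂ : (Fin d → ℝ) → ℝ) (hc₁ : ContinuousOn f₁ I) (hc₂ : ContinuousOn f₂ I)
    (hnz₁ : ∃ x ∈ I, f₁ x ≠ 0) (hnz₂ : ∃ x ∈ I, f₂ x ≠ 0)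
    (hdep : ∀ x₁ ∈ I, ∀ x₂ ∈ I, x₁ ≠ x₂ →
      ¬ LinearIndependent ℝ ![((f₁ x₁, f₂ x₁) : ℝ × ℝ), (f₁ x₂, f₂ x₂)]) :
    ∃ α₁ α₂ : ℝ, ((α₁, α₂) : ℝ × ℝ) ≠ 0 ∧
      ∃ U : Set (Fin d → ℝ), U ⊆ I ∧ IsOpen U ∧ U.Nonempty ∧
        ∀ x ∈ U, α₁ * f₁ x + α₂ * f₂ x = 0 := by
  obtain ⟨x₀, hx₀I, hx₀⟩ := hnz₁
  refine ⟨f₂ x₀, -f₁ x₀, ?_, I, le_refl _, hI, ⟨x₀, hx₀I⟩, ?_⟩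
  · simp [Prod.ext_iff, hx₀]
  · intro x hxI
    by_cases hxx : x = x₀
    · subst hxx; ring
    · -- determinant vanishes
      by_contra hne
      apply hdep x₀ hx₀I x hxI (Ne.symm hxx)
      have hD : f₂ x₀ * f₁ x - f₁ x₀ * f₂ x ≠ 0 := by
        intro h; apply hne; linarith [h]
      rw [linearIndependent_fin2]
      constructor
      · simp only [Matrix.cons_val_one, Matrix.head_cons]
        intro h
        apply hD
        rw [Prod.ext_iff] at h
        simp at h
        rw [h.1, h.2]; ring
      · intro a h
        simp only [Matrix.cons_val_one, Matrix.head_cons, Matrix.cons_val_zero,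
          Prod.smul_mk, smul_eq_mul] at h
        rw [Prod.ext_iff] at h
        simp at h
        apply hD
        rw [← h.1, ← h.2]; ring
end

section
/- Let f₁,…,f_n be continuous real-valued functions on a connected open set I ⊆ ℝ^d, none identically zero. If for every choice of n points x₁,…,x_n ∈ I the n vectors ψ(x_j) = (f₁(x_j),…,f_n(x_j)) ∈ ℝ^n are linearly dependent, then the functions f₁,…,f_n are linearly dependent: there exist constants α₁,…,α_n, not all zero, such that α₁ f₁ + … + α_n f_n vanishes on a nonempty open subset of I. -/
/-!
If the vectors ψ(x) = (f₁(x), …, f_n(x)), x ∈ I, spanned ℝⁿ, a basis of ℝⁿ could be chosen among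
them, i.e. n points with independent ψ(x_j). Hence they lie in a hyperplane {v | α ⬝ᵥ v = 0},
and α is a linear relation between the fᵢ on all of I.
-/

theorem Submodule.span_ne_top_of_forall_not_linearIndependent {K V ι : Type*} [DivisionRing K]
    [AddCommGroup V] [Module K V] [FiniteDimensional K V] [Fintype ι]
    (hι : Fintype.card ι = Module.finrank K V) {S : Set V}
    (hS : ∀ v : ι → V, (∀ j, v j ∈ S) → ¬ LinearIndependent K v) :
    Submodule.span K S ≠ ⊤ := by
  intro hspan
  let b := Module.Basis.ofSpan hspan.ge
  let e := (Fintype.equivFin ι).trans ((Module.finBasisOfFinrankEq K V hι.symm).indexEquiv b)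
  exact hS (b ∘ e) (fun j => Module.Basis.ofSpan_subset hspan.ge ⟨e j, rfl⟩)
    (b.linearIndependent.comp e e.injective)

theorem Matrix.exists_ne_zero_forall_dotProduct_eq_zero {K ι : Type*} [Field K] [Fintype ι]
    {S : Set (ι → K)} (hS : Submodule.span K S ≠ ⊤) :
    ∃ α : ι → K, α ≠ 0 ∧ ∀ v ∈ S, α ⬝ᵥ v = 0 := by
  classical
  obtain ⟨φ, hφ, hker⟩ := Submodule.exists_dual_map_eq_bot_of_lt_top hS.lt_top inferInstance
  obtain ⟨α, rfl⟩ := (dotProductEquiv K ι).surjective φ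
  refine ⟨α, by simpa using hφ, fun v hv => ?_⟩
  rw [← dotProductEquiv_apply_apply, ← Submodule.mem_bot K, ← hker]
  exact Submodule.mem_map_of_mem (Submodule.subset_span hv)

theorem stmt_5_general {d n : ℕ} (I : Set (Fin d → ℝ)) (hI : IsOpen I) (hconn : IsConnected I)
    (f : Fin n → (Fin d → ℝ) → ℝ)
    (hdep : ∀ x : Fin n → (Fin d → ℝ), (∀ j, x j ∈ I) →
      ¬ LinearIndependent ℝ (fun j : Fin n => (fun i : Fin n => f i (x j)))) :
    ∃ α : Fin n → ℝ, α ≠ 0 ∧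
      ∃ U : Set (Fin d → ℝ), U ⊆ I ∧ IsOpen U ∧ U.Nonempty ∧
        ∀ x ∈ U, ∑ i, α i * f i x = 0 := by
  let ψ : (Fin d → ℝ) → Fin n → ℝ := fun x i => f i x
  have hspan : Submodule.span ℝ (ψ '' I) ≠ ⊤ := by
    refine Submodule.span_ne_top_of_forall_not_linearIndependent (ι := Fin n) (by simp)
      fun v hv => ?_
    choose x hxI hx using hv
    simpa only [← funext hx] using hdep x hxI
  obtain ⟨α, hα, hψ⟩ := Matrix.exists_ne_zero_forall_dotProduct_eq_zero hspan
  exact ⟨α, hα, I, subset_rfl, hI, hconn.nonempty, fun x hx => hψ _ ⟨x, hx, rfl⟩⟩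

/-- If f₁,…,f_n are continuous, none identically zero on a connected open
set I ⊆ ℝ^d, and for every choice of n points x₁,…,x_n ∈ I the vectors
ψ(x_j) = (f₁(x_j),…,f_n(x_j)) ∈ ℝ^n are linearly dependent, then the functions are
linearly dependent on a nonempty open subset of I. -/
theorem stmt_5 {d n : ℕ} (I : Set (Fin d → ℝ)) (hI : IsOpen I) (hconn : IsConnected I)
    (f : Fin n → (Fin d → ℝ) → ℝ) (hc : ∀ i, ContinuousOn (f i) I)
    (hnz : ∀ i, ∃ x ∈ I, f i x ≠ 0)
    (hdep : ∀ x : Fin n → (Fin d → ℝ), (∀ j, x j ∈ I) →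
      ¬ LinearIndependent ℝ (fun j : Fin n => (fun i : Fin n => f i (x j)))) :
    ∃ α : Fin n → ℝ, α ≠ 0 ∧
      ∃ U : Set (Fin d → ℝ), U ⊆ I ∧ IsOpen U ∧ U.Nonempty ∧
        ∀ x ∈ U, ∑ i, α i * f i x = 0 :=
  stmt_5_general I hI hconn f hdep
end

section
/- Let Ω ⊆ ℝ^d be a bounded open set, and let v ∈ C¹(Ω̄, ℝ^d), φ ∈ C¹(ℝ^d). Then ∫_Ω φ (div v)² dx − ∑_{i,j} ∫_Ω φ ∂_j v_i ∂_i v_j dx = ∫_Ω {(v·∇)v}·∇φ dx − ∫_Ω (v·∇φ) div v dx + ∫_{∂Ω} φ [ v_ν div v − ((v·∇)v)·ν ] dσ, where ν is the outward normal and v_ν = v·ν, assuming ∂Ω is C¹ so that the divergence theorem applies. -/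
/-!
For a `C²` field `u`, the divergence theorem applied to `F = φ ((div u) u − (u·∇)u)` gives the
identity, because by the symmetry of second derivatives
`div F = φ (div u)² − φ ∑ ∂ⱼuᵢ ∂ᵢuⱼ + (u·∇φ) div u − ((u·∇)u)·∇φ`.
A `C¹` field `v` is approximated on `Ω̄` by mollifications `uₙ` of a compactly supported cutoff
of `v`: the values and first derivatives of `uₙ` converge pointwise and stay uniformly bounded,
so each integral passes to the limit by dominated convergence. On the boundary this needs `σ`
finite and `ν` measurable; both come from the divergence theorem for the fields `(x_k + c) e_k`,
whose divergence is `1`.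
-/

open MeasureTheory

/-- Partial derivative in direction `i`. -/
noncomputable def pd {d : ℕ} (i : Fin d) (f : (Fin d → ℝ) → ℝ) (x : Fin d → ℝ) : ℝ :=
  fderiv ℝ f x (Pi.single i 1)

open Filter Topology

section PartialDerivatives

variable {d : ℕ} {f g : (Fin d → ℝ) → ℝ} {x : Fin d → ℝ}

theorem pd_mul (hf : DifferentiableAt ℝ f x) (hg : DifferentiableAt ℝ g x) (i : Fin d) :
    pd i (fun y => f y * g y) x = pd i f x * g x + f x * pd i g x := by
  simp only [pd, fderiv_fun_mul hf hg, add_apply, smul_apply, smul_eq_mul]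
  ring

theorem pd_sub (hf : DifferentiableAt ℝ f x) (hg : DifferentiableAt ℝ g x) (i : Fin d) :
    pd i (fun y => f y - g y) x = pd i f x - pd i g x := by
  simp only [pd, fderiv_fun_sub hf hg, sub_apply]

theorem pd_sum {ι : Type*} {s : Finset ι} {f : ι → (Fin d → ℝ) → ℝ}
    (hf : ∀ j ∈ s, DifferentiableAt ℝ (f j) x) (i : Fin d) :
    pd i (fun y => ∑ j ∈ s, f j y) x = ∑ j ∈ s, pd i (f j) x := by
  simp only [pd, fderiv_fun_sum hf, sum_apply]

theorem pd_apply_eq_fderiv {u : (Fin d → ℝ) → Fin d → ℝ} (hu : DifferentiableAt ℝ u x)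
    (i j : Fin d) : pd i (fun y => u y j) x = fderiv ℝ u x (Pi.single i 1) j := by
  rw [pd, fderiv_apply hu]
  rfl

theorem contDiff_pd {n : WithTop ℕ∞} (hf : ContDiff ℝ (n + 1) f) (i : Fin d) :
    ContDiff ℝ n (pd i f) :=
  (hf.fderiv_right le_rfl).clm_apply contDiff_const

theorem continuous_pd (hf : ContDiff ℝ 1 f) (i : Fin d) : Continuous (pd i f) :=
  (contDiff_pd (n := 0) hf i).continuous

theorem pd_comm (hf : ContDiff ℝ 2 f) (i j : Fin d) (x : Fin d → ℝ) :
    pd i (pd j f) x = pd j (pd i f) x := by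
  have hf' : DifferentiableAt ℝ (fderiv ℝ f) x :=
    (hf.fderiv_right (m := 1) (by norm_num)).differentiable (by norm_num) x
  have hsecond : ∀ a b : Fin d,
      pd a (pd b f) x = fderiv ℝ (fderiv ℝ f) x (Pi.single a 1) (Pi.single b 1) := by
    intro a b
    change fderiv ℝ (fun y => fderiv ℝ f y (Pi.single b 1)) x (Pi.single a 1) = _
    rw [fderiv_clm_apply hf' (differentiableAt_const _)]
    simp
  rw [hsecond, hsecond, second_derivative_symmetric
    (fun y => (hf.differentiable (by norm_num) y).hasFDerivAt) hf'.hasFDerivAt]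

end PartialDerivatives

section VectorCalculus

variable {d : ℕ}

noncomputable def divergence (F : (Fin d → ℝ) → Fin d → ℝ) (x : Fin d → ℝ) : ℝ :=
  ∑ i, pd i (fun y => F y i) x

noncomputable def dirDeriv (u w : (Fin d → ℝ) → Fin d → ℝ) (x : Fin d → ℝ) (j : Fin d) : ℝ :=
  ∑ i, u x i * pd i (fun y => w y j) x

variable {f φ : (Fin d → ℝ) → ℝ} {F G u w : (Fin d → ℝ) → Fin d → ℝ} {x : Fin d → ℝ}

theorem divergence_smul (hf : DifferentiableAt ℝ f x) (hF : DifferentiableAt ℝ F x) :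
    divergence (fun y => f y • F y) x = ∑ i, pd i f x * F x i + f x * divergence F x := by
  simp only [divergence, Pi.smul_apply, smul_eq_mul,
    pd_mul hf (differentiableAt_pi.1 hF _), Finset.sum_add_distrib, Finset.mul_sum]

theorem divergence_sub (hF : DifferentiableAt ℝ F x) (hG : DifferentiableAt ℝ G x) :
    divergence (fun y => F y - G y) x = divergence F x - divergence G x := by
  simp only [divergence, Pi.sub_apply,
    pd_sub (differentiableAt_pi.1 hF _) (differentiableAt_pi.1 hG _), Finset.sum_sub_distrib]

theorem ContDiff.divergence {n : WithTop ℕ∞} (hF : ContDiff ℝ (n + 1) F) :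
    ContDiff ℝ n (divergence F) :=
  ContDiff.sum fun i _ => contDiff_pd (contDiff_pi.1 hF i) i

theorem ContDiff.dirDeriv {n : WithTop ℕ∞} (hu : ContDiff ℝ n u) (hw : ContDiff ℝ (n + 1) w) :
    ContDiff ℝ n (dirDeriv u w) :=
  contDiff_pi.2 fun j => ContDiff.sum fun i _ => (contDiff_pi.1 hu i).mul
    (contDiff_pd (contDiff_pi.1 hw j) i)

theorem divergence_dirDeriv_self (hu : ContDiff ℝ 2 u) (x : Fin d → ℝ) :
    divergence (dirDeriv u u) x
      = ∑ i, ∑ j, pd j (fun y => u y i) x * pd i (fun y => u y j) x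
        + ∑ i, u x i * pd i (divergence u) x := by
  have hu1 : ContDiff ℝ 1 u := hu.of_le (by norm_num)
  have hcomp : ∀ j, DifferentiableAt ℝ (fun y => u y j) x :=
    fun j => (contDiff_pi.1 hu1 j).differentiable one_ne_zero x
  have hpd : ∀ i j, DifferentiableAt ℝ (pd i fun y => u y j) x :=
    fun i j => (contDiff_pd (contDiff_pi.1 hu j) i).differentiable one_ne_zero x
  have hdiv : ∀ i, pd i (divergence u) x = ∑ j, pd j (pd i fun y => u y j) x := fun i => by
    change pd i (fun y => ∑ j, pd j (fun z => u z j) y) x = _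
    rw [pd_sum fun j _ => hpd j j]
    exact Finset.sum_congr rfl fun j _ => pd_comm (contDiff_pi.1 hu j) i j x
  have hrow : ∀ j, pd j (fun y => dirDeriv u u y j) x
      = ∑ i, (pd j (fun y => u y i) x * pd i (fun y => u y j) x
        + u x i * pd j (pd i fun y => u y j) x) := fun j => by
    simp only [dirDeriv]
    rw [pd_sum fun i _ => (hcomp i).fun_mul (hpd i j)]
    exact Finset.sum_congr rfl fun i _ => pd_mul (hcomp i) (hpd i j) j
  simp only [divergence, hrow, hdiv, Finset.sum_add_distrib, Finset.mul_sum]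
  exact congrArg₂ (· + ·) Finset.sum_comm Finset.sum_comm

theorem divergence_smul_sub_dirDeriv (hu : ContDiff ℝ 2 u) (hφ : DifferentiableAt ℝ φ x) :
    divergence (fun y => φ y • (divergence u y • u y - dirDeriv u u y)) x
      = φ x * divergence u x ^ 2
        - ∑ i, ∑ j, φ x * pd j (fun y => u y i) x * pd i (fun y => u y j) x
        + (∑ i, u x i * pd i φ x) * divergence u x
        - ∑ j, dirDeriv u u x j * pd j φ x := by
  have hdiv : DifferentiableAt ℝ (divergence u) x :=
    (hu.divergence (n := 1)).differentiable one_ne_zero x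
  have hu' : DifferentiableAt ℝ u x := hu.differentiable (by norm_num) x
  have hD : DifferentiableAt ℝ (dirDeriv u u) x :=
    ((hu.of_le (by norm_num)).dirDeriv (n := 1) hu).differentiable one_ne_zero x
  have hsmul : DifferentiableAt ℝ (fun y => divergence u y • u y) x := hdiv.smul hu'
  rw [divergence_smul hφ (hsmul.fun_sub hD), divergence_sub hsmul hD, divergence_smul hdiv hu',
    divergence_dirDeriv_self hu]
  have e1 : ∑ i, pd i φ x * (divergence u x • u x - dirDeriv u u x) i
      = (∑ i, u x i * pd i φ x) * divergence u x - ∑ j, dirDeriv u u x j * pd j φ x := by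
    rw [Finset.sum_mul, ← Finset.sum_sub_distrib]
    refine Finset.sum_congr rfl fun i _ => ?_
    simp only [Pi.sub_apply, Pi.smul_apply, smul_eq_mul]
    ring
  have e2 : ∑ i, pd i (divergence u) x * u x i = ∑ i, u x i * pd i (divergence u) x :=
    Finset.sum_congr rfl fun i _ => mul_comm _ _
  have e3 : φ x * ∑ i, ∑ j, pd j (fun y => u y i) x * pd i (fun y => u y j) x
      = ∑ i, ∑ j, φ x * pd j (fun y => u y i) x * pd i (fun y => u y j) x := by
    simp only [Finset.mul_sum, mul_assoc]
  rw [e1, e2, ← e3]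
  ring

end VectorCalculus

section Identity

variable {d : ℕ}

noncomputable def ibpLHS (Ω : Set (Fin d → ℝ)) (φ : (Fin d → ℝ) → ℝ)
    (u : (Fin d → ℝ) → Fin d → ℝ) : ℝ :=
  (∫ x in Ω, φ x * divergence u x ^ 2)
    - ∑ i, ∑ j, ∫ x in Ω, φ x * pd j (fun y => u y i) x * pd i (fun y => u y j) x

noncomputable def ibpRHS (Ω : Set (Fin d → ℝ)) (σ : Measure (Fin d → ℝ))
    (ν : (Fin d → ℝ) → Fin d → ℝ) (φ : (Fin d → ℝ) → ℝ) (u : (Fin d → ℝ) → Fin d → ℝ) : ℝ :=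
  (∫ x in Ω, ∑ j, dirDeriv u u x j * pd j φ x)
    - (∫ x in Ω, (∑ i, u x i * pd i φ x) * divergence u x)
    + ∫ x, φ x * ((∑ i, u x i * ν x i) * divergence u x - ∑ j, dirDeriv u u x j * ν x j) ∂σ

variable {Ω : Set (Fin d → ℝ)} {σ : Measure (Fin d → ℝ)} {ν : (Fin d → ℝ) → Fin d → ℝ}
  {φ : (Fin d → ℝ) → ℝ} {u : (Fin d → ℝ) → Fin d → ℝ}

theorem ibpLHS_eq_ibpRHS_of_contDiff_two (hbd : Bornology.IsBounded Ω)
    (hdivthm : ∀ F : (Fin d → ℝ) → Fin d → ℝ, ContDiff ℝ 1 F →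
      ∫ x in Ω, divergence F x = ∫ x, ∑ i, F x i * ν x i ∂σ)
    (hu : ContDiff ℝ 2 u) (hφ : ContDiff ℝ 1 φ) :
    ibpLHS Ω φ u = ibpRHS Ω σ ν φ u := by
  have hu1 : ContDiff ℝ 1 u := hu.of_le (by norm_num)
  have hdiv : ContDiff ℝ 1 (divergence u) := hu.divergence
  have hD : ContDiff ℝ 1 (dirDeriv u u) := hu1.dirDeriv hu
  have key := hdivthm (fun y => φ y • (divergence u y • u y - dirDeriv u u y))
    (hφ.smul ((hdiv.smul hu1).sub hD))
  simp only [divergence_smul_sub_dirDeriv hu (hφ.differentiable one_ne_zero _)] at key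
  have hbdry : ∀ x, ∑ i, (φ x • (divergence u x • u x - dirDeriv u u x)) i * ν x i
      = φ x * ((∑ i, u x i * ν x i) * divergence u x - ∑ j, dirDeriv u u x j * ν x j) := by
    intro x
    simp only [Pi.smul_apply, Pi.sub_apply, smul_eq_mul, Finset.mul_sum, Finset.sum_mul,
      ← Finset.sum_sub_distrib]
    exact Finset.sum_congr rfl fun i _ => by ring
  simp only [hbdry] at key
  have hint : ∀ {g : (Fin d → ℝ) → ℝ}, Continuous g → Integrable g (volume.restrict Ω) :=
    fun hg => (hg.continuousOn.integrableOn_compact hbd.isCompact_closure).mono_set subset_closure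
  have hφc := hφ.continuous
  have hpdφ := continuous_pd hφ
  have hdivc := hdiv.continuous
  have huc : ∀ i, Continuous fun x => u x i := fun i => (continuous_apply i).comp hu.continuous
  have hDc : ∀ j, Continuous fun x => dirDeriv u u x j :=
    fun j => (continuous_apply j).comp hD.continuous
  have hpdu : ∀ i j, Continuous (pd i fun y => u y j) :=
    fun i j => continuous_pd (contDiff_pi.1 hu1 j) i
  have hA : Integrable (fun x => φ x * divergence u x ^ 2) (volume.restrict Ω) :=
    hint (by fun_prop)
  have hB : ∀ i j, Integrable
      (fun x => φ x * pd j (fun y => u y i) x * pd i (fun y => u y j) x) (volume.restrict Ω) :=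
    fun i j => hint (by fun_prop)
  have hB' := integrable_finsetSum Finset.univ fun i _ =>
    integrable_finsetSum Finset.univ fun j _ => hB i j
  have hC : Integrable (fun x => (∑ i, u x i * pd i φ x) * divergence u x) (volume.restrict Ω) :=
    hint (by fun_prop)
  have hD : Integrable (fun x => ∑ j, dirDeriv u u x j * pd j φ x) (volume.restrict Ω) :=
    hint (by fun_prop)
  have hsum : ∫ x in Ω, ∑ i, ∑ j, φ x * pd j (fun y => u y i) x * pd i (fun y => u y j) x
      = ∑ i, ∑ j, ∫ x in Ω, φ x * pd j (fun y => u y i) x * pd i (fun y => u y j) x := by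
    rw [integral_finsetSum _ fun i _ => integrable_finsetSum _ fun j _ => hB i j]
    exact Finset.sum_congr rfl fun i _ => integral_finsetSum _ fun j _ => hB i j
  rw [integral_sub (by exact (hA.sub hB').add hC) hD, integral_add (by exact hA.sub hB') hC,
    integral_sub hA hB', hsum] at key
  simp only [ibpLHS, ibpRHS]
  linarith

end Identity

section Mollification

open scoped ContDiff Convolution
open ContinuousLinearMap Metric

variable {E F : Type*} [NormedAddCommGroup E] [NormedSpace ℝ E] [FiniteDimensional ℝ E]
  [NormedAddCommGroup F] [NormedSpace ℝ F]

theorem ContDiffBump.norm_normed_convolution_le [MeasurableSpace E] [BorelSpace E]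
    {μ : Measure E} [μ.IsAddHaarMeasure] (ρ : ContDiffBump (0 : E)) {g : E → F} {M : ℝ}
    (hg : ∀ x, ‖g x‖ ≤ M) (x : E) : ‖(ρ.normed μ ⋆[lsmul ℝ ℝ, μ] g) x‖ ≤ M :=
  calc ‖∫ t, ρ.normed μ t • g (x - t) ∂μ‖ ≤ ∫ t, ρ.normed μ t * M ∂μ :=
        norm_integral_le_of_norm_le (ρ.integrable_normed.mul_const M) (ae_of_all _ fun t => by
          rw [norm_smul, Real.norm_of_nonneg (ρ.nonneg_normed t)]
          exact mul_le_mul_of_nonneg_left (hg _) (ρ.nonneg_normed t))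
    _ = M := by rw [integral_mul_const, ρ.integral_normed, one_mul]

theorem HasCompactSupport.exists_contDiff_tendsto_fderiv [CompleteSpace F] {v : E → F}
    (hv : ContDiff ℝ 1 v) (hc : HasCompactSupport v) :
    ∃ u : ℕ → E → F, (∀ n, ContDiff ℝ ∞ (u n)) ∧
      (∀ x, Tendsto (fun n => u n x) atTop (𝓝 (v x)) ∧
        Tendsto (fun n => fderiv ℝ (u n) x) atTop (𝓝 (fderiv ℝ v x))) ∧
      ∃ C, ∀ n x, ‖u n x‖ ≤ C ∧ ‖fderiv ℝ (u n) x‖ ≤ C := by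
  borelize E
  let μ : Measure E := .addHaar
  let ρ : ℕ → ContDiffBump (0 : E) := fun n =>
    ⟨((n : ℝ) + 1)⁻¹ / 2, ((n : ℝ) + 1)⁻¹, by positivity, half_lt_self (by positivity)⟩
  have hρ : Tendsto (fun n => (ρ n).rOut) atTop (𝓝 0) := by
    simpa only [one_div] using tendsto_one_div_add_atTop_nhds_zero_nat (𝕜 := ℝ)
  have hDv : Continuous (fderiv ℝ v) := hv.continuous_fderiv one_ne_zero
  have hfderiv : ∀ n x, fderiv ℝ (ρ n |>.normed μ ⋆[lsmul ℝ ℝ, μ] v) x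
      = ((ρ n).normed μ ⋆[lsmul ℝ ℝ, μ] fderiv ℝ v) x := fun n x =>
    (hc.hasFDerivAt_convolution_right _ (ρ n).continuous_normed.locallyIntegrable hv x).fderiv
  obtain ⟨M, hM⟩ := hc.exists_bound_of_continuous hv.continuous
  obtain ⟨M', hM'⟩ := (hc.fderiv ℝ).exists_bound_of_continuous hDv
  refine ⟨fun n => (ρ n).normed μ ⋆[lsmul ℝ ℝ, μ] v, fun n => ?_, fun x => ⟨?_, ?_⟩,
    max M M', fun n x => ⟨?_, ?_⟩⟩
  · exact (ρ n).hasCompactSupport_normed.contDiff_convolution_left _ (ρ n).contDiff_normed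
      hv.continuous.locallyIntegrable
  · exact ContDiffBump.convolution_tendsto_right_of_continuous hρ hv.continuous x
  · simpa only [hfderiv] using ContDiffBump.convolution_tendsto_right_of_continuous hρ hDv x
  · exact ((ρ n).norm_normed_convolution_le hM x).trans (le_max_left _ _)
  · rw [hfderiv]
    exact ((ρ n).norm_normed_convolution_le hM' x).trans (le_max_right _ _)

theorem ContDiff.exists_contDiff_tendsto_fderiv_on [CompleteSpace F] {v : E → F}
    (hv : ContDiff ℝ 1 v) {K : Set E} (hK : Bornology.IsBounded K) :
    ∃ u : ℕ → E → F, (∀ n, ContDiff ℝ ∞ (u n)) ∧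
      (∀ x ∈ K, Tendsto (fun n => u n x) atTop (𝓝 (v x)) ∧
        Tendsto (fun n => fderiv ℝ (u n) x) atTop (𝓝 (fderiv ℝ v x))) ∧
      ∃ C, ∀ n x, ‖u n x‖ ≤ C ∧ ‖fderiv ℝ (u n) x‖ ≤ C := by
  obtain ⟨R, hR0, hR⟩ := hK.subset_closedBall_lt 0 0
  let χ : ContDiffBump (0 : E) := ⟨R + 1, R + 2, by linarith, by linarith⟩
  have hχv : ContDiff ℝ 1 fun y => χ y • v y := (χ.contDiff (n := 1)).smul hv
  obtain ⟨u, hu, hlim, hC⟩ :=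
    χ.hasCompactSupport.smul_right.exists_contDiff_tendsto_fderiv hχv
  refine ⟨u, hu, fun x hx => ?_, hC⟩
  have hxR : x ∈ ball (0 : E) (R + 1) := by
    have := mem_closedBall_zero_iff.1 (hR hx)
    rw [mem_ball_zero_iff]
    linarith
  have heq : (fun y => χ y • v y) =ᶠ[𝓝 x] v := by
    filter_upwards [isOpen_ball.mem_nhds hxR] with y hy
    rw [χ.one_of_mem_closedBall (ball_subset_closedBall hy), one_smul]
  rw [← heq.eq_of_nhds, ← heq.fderiv_eq]
  exact hlim x

end Mollification

section Jets

open scoped ContDiff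
open Metric

variable {d : ℕ}

noncomputable def jet (u : (Fin d → ℝ) → Fin d → ℝ) (x : Fin d → ℝ) :
    (Fin d → ℝ) × (Fin d → Fin d → ℝ) :=
  (u x, fun i j => pd i (fun y => u y j) x)

theorem continuous_jet {u : (Fin d → ℝ) → Fin d → ℝ} (hu : ContDiff ℝ 1 u) :
    Continuous (jet u) :=
  hu.continuous.prodMk
    (continuous_pi fun i => continuous_pi fun j => continuous_pd (contDiff_pi.1 hu j) i)

theorem exists_contDiff_two_tendsto_jet {v : (Fin d → ℝ) → Fin d → ℝ} (hv : ContDiff ℝ 1 v)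
    {K : Set (Fin d → ℝ)} (hK : Bornology.IsBounded K) :
    ∃ u : ℕ → (Fin d → ℝ) → Fin d → ℝ, (∀ n, ContDiff ℝ 2 (u n)) ∧
      (∀ x ∈ K, Tendsto (fun n => jet (u n) x) atTop (𝓝 (jet v x))) ∧
      ∃ C, ∀ n x, jet (u n) x ∈ closedBall 0 C := by
  let Φ : (Fin d → ℝ) × ((Fin d → ℝ) →L[ℝ] Fin d → ℝ) → (Fin d → ℝ) × (Fin d → Fin d → ℝ) :=
    fun p => (p.1, fun i j => p.2 (Pi.single i 1) j)
  have hΦ : Continuous Φ := by fun_prop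
  have hjet : ∀ {w : (Fin d → ℝ) → Fin d → ℝ} {x}, DifferentiableAt ℝ w x →
      jet w x = Φ (w x, fderiv ℝ w x) := fun hw =>
    Prod.ext rfl (funext₂ fun i j => pd_apply_eq_fderiv hw i j)
  obtain ⟨u, hu, hlim, C, hC⟩ := hv.exists_contDiff_tendsto_fderiv_on hK
  have hdu : ∀ n x, DifferentiableAt ℝ (u n) x := fun n => (hu n).differentiable (by simp)
  obtain ⟨C', hC'⟩ := ((isCompact_closedBall 0 C).image hΦ).isBounded.subset_closedBall 0
  refine ⟨u, fun n => (hu n).of_le (by norm_cast), fun x hx => ?_, C',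
    fun n x => hC' ⟨(u n x, fderiv ℝ (u n) x), ?_, (hjet (hdu n x)).symm⟩⟩
  · rw [hjet (hv.differentiable one_ne_zero x)]
    exact ((hΦ.tendsto _).comp ((hlim x hx).1.prodMk_nhds (hlim x hx).2)).congr
      fun n => (hjet (hdu n x)).symm
  · exact mem_closedBall_zero_iff.2 (norm_prod_le_iff.2 (hC n x))

end Jets

theorem tendsto_integral_comp_of_forall_mem_compact {X Y : Type*} [MeasurableSpace X]
    [TopologicalSpace Y] {μ : Measure X} [IsFiniteMeasure μ] {K : Set Y} (hK : IsCompact K)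
    {G : Y → ℝ} (hG : Continuous G) {f : ℕ → X → Y} {g : X → Y}
    (hf : ∀ n, AEStronglyMeasurable (f n) μ) (hfK : ∀ n, ∀ᵐ x ∂μ, f n x ∈ K)
    (hfg : ∀ᵐ x ∂μ, Tendsto (fun n => f n x) atTop (𝓝 (g x))) :
    Tendsto (fun n => ∫ x, G (f n x) ∂μ) atTop (𝓝 (∫ x, G (g x) ∂μ)) := by
  obtain ⟨C, hC⟩ := hK.exists_bound_of_continuousOn hG.continuousOn
  exact tendsto_integral_of_dominated_convergence (fun _ => C)
    (fun n => hG.comp_aestronglyMeasurable (hf n)) (integrable_const C)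
    (fun n => (hfK n).mono fun x hx => hC _ hx) (hfg.mono fun x hx => (hG.tendsto _).comp hx)

section Limit

open Metric

variable {d : ℕ} {Ω : Set (Fin d → ℝ)} {φ : (Fin d → ℝ) → ℝ}
  {u : ℕ → (Fin d → ℝ) → Fin d → ℝ} {v : (Fin d → ℝ) → Fin d → ℝ} {C : ℝ}

theorem tendsto_setIntegral_comp_jet (hbd : Bornology.IsBounded Ω) (hu : ∀ n, ContDiff ℝ 1 (u n))
    (hC : ∀ n x, jet (u n) x ∈ closedBall 0 C)
    (hlim : ∀ x ∈ closure Ω, Tendsto (fun n => jet (u n) x) atTop (𝓝 (jet v x)))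
    {G : (Fin d → ℝ) × (Fin d → ℝ) × (Fin d → Fin d → ℝ) → ℝ} (hG : Continuous G) :
    Tendsto (fun n => ∫ x in Ω, G (x, jet (u n) x)) atTop (𝓝 (∫ x in Ω, G (x, jet v x))) := by
  have : IsFiniteMeasure (volume.restrict Ω) := isFiniteMeasure_restrict.2 hbd.measure_lt_top.ne
  have hΩ : ∀ᵐ x ∂(volume.restrict Ω), x ∈ closure Ω :=
    ae_restrict_of_ae_restrict_of_subset subset_closure
      (ae_restrict_mem isClosed_closure.measurableSet)
  exact tendsto_integral_comp_of_forall_mem_compact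
    (hbd.isCompact_closure.prod (isCompact_closedBall 0 C)) hG
    (fun n => (continuous_id.prodMk (continuous_jet (hu n))).aestronglyMeasurable)
    (fun n => hΩ.mono fun x hx => ⟨hx, hC n x⟩)
    (hΩ.mono fun x hx => tendsto_const_nhds.prodMk_nhds (hlim x hx))

theorem tendsto_ibpLHS (hbd : Bornology.IsBounded Ω) (hφ : Continuous φ)
    (hu : ∀ n, ContDiff ℝ 1 (u n)) (hC : ∀ n x, jet (u n) x ∈ closedBall 0 C)
    (hlim : ∀ x ∈ closure Ω, Tendsto (fun n => jet (u n) x) atTop (𝓝 (jet v x))) :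
    Tendsto (fun n => ibpLHS Ω φ (u n)) atTop (𝓝 (ibpLHS Ω φ v)) :=
  (tendsto_setIntegral_comp_jet hbd hu hC hlim
    (G := fun p => φ p.1 * (∑ i, p.2.2 i i) ^ 2) (by fun_prop)).sub
  (tendsto_finsetSum _ fun i _ => tendsto_finsetSum _ fun j _ =>
    tendsto_setIntegral_comp_jet hbd hu hC hlim
      (G := fun p => φ p.1 * p.2.2 j i * p.2.2 i j) (by fun_prop))

theorem tendsto_ibpRHS {σ : Measure (Fin d → ℝ)} [IsFiniteMeasure σ]
    {ν : (Fin d → ℝ) → Fin d → ℝ} (hν : AEStronglyMeasurable ν σ)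
    (hσν : ∀ᵐ x ∂σ, x ∈ closure Ω ∧ ν x ∈ closedBall 0 1)
    (hbd : Bornology.IsBounded Ω) (hφ : ContDiff ℝ 1 φ)
    (hu : ∀ n, ContDiff ℝ 1 (u n)) (hC : ∀ n x, jet (u n) x ∈ closedBall 0 C)
    (hlim : ∀ x ∈ closure Ω, Tendsto (fun n => jet (u n) x) atTop (𝓝 (jet v x))) :
    Tendsto (fun n => ibpRHS Ω σ ν φ (u n)) atTop (𝓝 (ibpRHS Ω σ ν φ v)) := by
  have hφc := hφ.continuous
  have hpdφ := continuous_pd hφ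
  have hboundary := tendsto_integral_comp_of_forall_mem_compact
    ((hbd.isCompact_closure.prod (isCompact_closedBall 0 C)).prod (isCompact_closedBall 0 1))
    (G := fun p : ((Fin d → ℝ) × (Fin d → ℝ) × (Fin d → Fin d → ℝ)) × (Fin d → ℝ) =>
      φ p.1.1 * ((∑ i, p.1.2.1 i * p.2 i) * (∑ i, p.1.2.2 i i)
        - ∑ j, (∑ i, p.1.2.1 i * p.1.2.2 i j) * p.2 j)) (by fun_prop)
    (f := fun n x => ((x, jet (u n) x), ν x)) (g := fun x => ((x, jet v x), ν x))
    (fun n => (continuous_id.prodMk (continuous_jet (hu n))).aestronglyMeasurable.prodMk hν)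
    (fun n => hσν.mono fun x hx => ⟨⟨hx.1, hC n x⟩, hx.2⟩)
    (hσν.mono fun x hx => (tendsto_const_nhds.prodMk_nhds (hlim x hx.1)).prodMk_nhds
      tendsto_const_nhds)
  exact ((tendsto_setIntegral_comp_jet hbd hu hC hlim
    (G := fun p => ∑ j, (∑ i, p.2.1 i * p.2.2 i j) * pd j φ p.1) (by fun_prop)).sub
    (tendsto_setIntegral_comp_jet hbd hu hC hlim
      (G := fun p => (∑ i, p.2.1 i * pd i φ p.1) * ∑ i, p.2.2 i i) (by fun_prop))).add hboundary

end Limit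

section NormalField

variable {d : ℕ} {Ω : Set (Fin d → ℝ)} {σ : Measure (Fin d → ℝ)} {ν : (Fin d → ℝ) → Fin d → ℝ}

theorem ae_mem_of_forall_measure_eq_measure_inter {X : Type*} [MeasurableSpace X] {μ : Measure X}
    {S : Set X} (h : ∀ s, μ s = μ (s ∩ S)) : ∀ᵐ x ∂μ, x ∈ S := by
  rw [ae_iff, h, show {x | x ∉ S} ∩ S = ∅ from Set.compl_inter_self S, measure_empty]

theorem norm_le_one_of_sum_sq_eq_one {ι : Type*} [Fintype ι] {a : ι → ℝ}
    (h : ∑ i, a i ^ 2 = 1) : ‖a‖ ≤ 1 :=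
  (pi_norm_le_iff_of_nonneg zero_le_one).2 fun k => (Real.norm_eq_abs _).trans_le <|
    (sq_le_one_iff_abs_le_one _).1
      (h ▸ Finset.single_le_sum (fun i _ => sq_nonneg (a i)) (Finset.mem_univ k))

theorem divergence_shift_smul_single (k : Fin d) (c : ℝ) (x : Fin d → ℝ) :
    divergence (fun y => (y k + c) • Pi.single k (1 : ℝ)) x = 1 := by
  have hpd : ∀ i, pd i (fun y => y k + c) x = (Pi.single i 1 : Fin d → ℝ) k := fun i => by
    rw [pd, ((hasFDerivAt_apply k x).add_const c).fderiv]
    rfl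
  rw [divergence_smul (by fun_prop) (differentiableAt_const _)]
  simp only [hpd]
  simp [divergence, pd, Pi.single_apply]

theorem integrable_shift_mul_normal (hΩ : IsOpen Ω) (hne : Ω.Nonempty)
    (hbd : Bornology.IsBounded Ω)
    (hdivthm : ∀ F : (Fin d → ℝ) → Fin d → ℝ, ContDiff ℝ 1 F →
      ∫ x in Ω, divergence F x = ∫ x, ∑ i, F x i * ν x i ∂σ)
    (k : Fin d) (c : ℝ) : Integrable (fun x => (x k + c) * ν x k) σ := by
  -- The flux of `(x k + c) • e k` equals `volume.real Ω ≠ 0`, which rules out the junk value `0`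
  -- that a non-integrable flux would have.
  have key := hdivthm (fun y => (y k + c) • Pi.single k 1) (by fun_prop)
  have hbdry : ∀ x : Fin d → ℝ, ∑ i, ((x k + c) • Pi.single k (1 : ℝ)) i * ν x i
      = (x k + c) * ν x k := fun x => by simp [Pi.single_apply]
  simp only [divergence_shift_smul_single, hbdry, setIntegral_const, smul_eq_mul, mul_one] at key
  have hvol : 0 < volume.real Ω :=
    ENNReal.toReal_pos (hΩ.measure_pos volume hne).ne' hbd.measure_lt_top.ne
  by_contra h
  rw [integral_undef h] at key
  exact hvol.ne' key

theorem isFiniteMeasure_and_aestronglyMeasurable_normal (hΩ : IsOpen Ω)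
    (hbd : Bornology.IsBounded Ω) (hσ : ∀ s, σ s = σ (s ∩ frontier Ω))
    (hν : ∀ x ∈ frontier Ω, ∑ i, ν x i ^ 2 = 1)
    (hdivthm : ∀ F : (Fin d → ℝ) → Fin d → ℝ, ContDiff ℝ 1 F →
      ∫ x in Ω, divergence F x = ∫ x, ∑ i, F x i * ν x i ∂σ) :
    IsFiniteMeasure σ ∧ AEStronglyMeasurable ν σ := by
  rcases Ω.eq_empty_or_nonempty with rfl | hne
  · obtain rfl : σ = 0 := Measure.measure_univ_eq_zero.1 (by simpa using hσ Set.univ)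
    exact ⟨inferInstance, aestronglyMeasurable_zero_measure _⟩
  obtain ⟨R, hR⟩ := hbd.closure.subset_closedBall 0
  have hshift : ∀ x ∈ frontier Ω, ∀ k, 1 ≤ x k + (R + 1) := fun x hx k => by
    have := (norm_le_pi_norm x k).trans
      (mem_closedBall_zero_iff.1 (hR (frontier_subset_closure hx)))
    rw [Real.norm_eq_abs] at this
    linarith [neg_abs_le (x k)]
  have hg := integrable_shift_mul_normal hΩ hne hbd hdivthm (c := R + 1)
  have hfr := ae_mem_of_forall_measure_eq_measure_inter hσ
  constructor
  · have h1 : Integrable (fun _ => (1 : ℝ)) σ := by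
      refine (integrable_finsetSum Finset.univ fun k _ => (hg k).norm).mono'
        aestronglyMeasurable_const ?_
      filter_upwards [hfr] with x hx
      calc ‖(1 : ℝ)‖ = ∑ k, |ν x k| * |ν x k| := by
            rw [norm_one, ← hν x hx]
            exact Finset.sum_congr rfl fun k _ => by rw [abs_mul_abs_self, sq]
        _ ≤ ∑ k, ‖(x k + (R + 1)) * ν x k‖ := Finset.sum_le_sum fun k _ => by
          rw [norm_mul, Real.norm_eq_abs, Real.norm_eq_abs,
            abs_of_pos (a := x k + (R + 1)) (by linarith [hshift x hx k])]
          have hνk : |ν x k| ≤ 1 := by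
            simpa using (norm_le_pi_norm (ν x) k).trans (norm_le_one_of_sum_sq_eq_one (hν x hx))
          exact mul_le_mul_of_nonneg_right (hνk.trans (hshift x hx k)) (abs_nonneg _)
    exact (integrable_const_iff.1 h1).resolve_left one_ne_zero
  · refine (aemeasurable_pi_lambda _ fun k => ?_).aestronglyMeasurable
    have hinv : Measurable fun x : Fin d → ℝ => (x k + (R + 1))⁻¹ := by fun_prop
    refine (hinv.aemeasurable.mul (hg k).aemeasurable).congr ?_
    filter_upwards [hfr] with x hx
    exact inv_mul_cancel_left₀ (zero_lt_one.trans_le (hshift x hx k)).ne' _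

end NormalField

/-- the intermediate double-integration-by-parts identity: for a bounded
open Ω ⊆ ℝ^d with C¹ boundary (encoded through a surface measure σ on ∂Ω and an outward
unit normal field ν satisfying the divergence theorem), v ∈ C¹(Ω̄, ℝ^d) and φ ∈ C¹(ℝ^d):
∫_Ω φ(div v)² − ∑_{i,j} ∫_Ω φ ∂_j v_i ∂_i v_j
  = ∫_Ω {(v·∇)v}·∇φ − ∫_Ω (v·∇φ) div v + ∫_∂Ω φ [v_ν div v − ((v·∇)v)·ν] dσ. -/
theorem stmt_15 {d : ℕ} (Ω : Set (Fin d → ℝ)) (hΩ : IsOpen Ω)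
    (hbd : Bornology.IsBounded Ω)
    (σ : Measure (Fin d → ℝ)) (ν : (Fin d → ℝ) → (Fin d → ℝ))
    (hσ : ∀ s : Set (Fin d → ℝ), σ s = σ (s ∩ frontier Ω))
    (hν_unit : ∀ x ∈ frontier Ω, ∑ i, ν x i ^ 2 = 1)
    (hdivthm : ∀ F : (Fin d → ℝ) → (Fin d → ℝ), ContDiff ℝ 1 F →
      ∫ x in Ω, ∑ i, pd i (fun y => F y i) x = ∫ x, ∑ i, F x i * ν x i ∂σ)
    (v : (Fin d → ℝ) → (Fin d → ℝ)) (hv : ContDiff ℝ 1 v)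
    (φ : (Fin d → ℝ) → ℝ) (hφ : ContDiff ℝ 1 φ) :
    (∫ x in Ω, φ x * (∑ i, pd i (fun y => v y i) x) ^ 2)
      - ∑ i, ∑ j, ∫ x in Ω, φ x * pd j (fun y => v y i) x * pd i (fun y => v y j) x
    = (∫ x in Ω, ∑ j, (∑ i, v x i * pd i (fun y => v y j) x) * pd j φ x)
      - (∫ x in Ω, (∑ i, v x i * pd i φ x) * ∑ i, pd i (fun y => v y i) x)
      + ∫ x, φ x * ((∑ i, v x i * ν x i) * (∑ i, pd i (fun y => v y i) x)
          - ∑ j, (∑ i, v x i * pd i (fun y => v y j) x) * ν x j) ∂σ := by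
  obtain ⟨hσfin, hνm⟩ :=
    isFiniteMeasure_and_aestronglyMeasurable_normal hΩ hbd hσ hν_unit hdivthm
  have hσν : ∀ᵐ x ∂σ, x ∈ closure Ω ∧ ν x ∈ Metric.closedBall 0 1 :=
    (ae_mem_of_forall_measure_eq_measure_inter hσ).mono fun x hx =>
      ⟨frontier_subset_closure hx,
        mem_closedBall_zero_iff.2 (norm_le_one_of_sum_sq_eq_one (hν_unit x hx))⟩
  obtain ⟨u, hu, hlim, C, hC⟩ := exists_contDiff_two_tendsto_jet hv hbd.closure
  have hu1 : ∀ n, ContDiff ℝ 1 (u n) := fun n => (hu n).of_le (by norm_num)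
  change ibpLHS Ω φ v = ibpRHS Ω σ ν φ v
  exact tendsto_nhds_unique (tendsto_ibpLHS hbd hφ.continuous hu1 hC hlim)
    ((tendsto_ibpRHS hνm hσν hbd hφ hu1 hC hlim).congr fun n =>
      (ibpLHS_eq_ibpRHS_of_contDiff_two hbd hdivthm (hu n) hφ).symm)
end
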